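/- arXiv:2303.11566 — 2 statements merged into one kernel-verified Lean document; each statement's English description precedes it below -/
import Mathlib

section
/- Let ρ0 and ρ1 be density matrices on ℂ^n, let τ ≥ 0, let A = ρ1 − τ·ρ0, and let P* be the orthogonal projection onto the span of the eigenvectors of A with strictly positive eigenvalues. Set x* = Tr(P*·ρ0), y* = Tr(P*·ρ1) (false alarm and detection rates of P*). Then for every measurement operator P' with 0 ≤ P' ≤ I, writing x' = Tr(P'·ρ0) and y' = Tr(P'·ρ1), the Neyman–Pearson-type inequality τ·(x* − x') ≤ y* − y' holds. -/
/-! In an eigenbasis `η_j` of `A`, `Tr(P·A) = Σ_j ⟨η_j, P η_j⟩ λ_j`, and `0 ≤ P ≤ I` forces every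
weight `⟨η_j, P η_j⟩` into `[0, 1]`; the sum is therefore maximised by taking weight `1` exactly
where `λ_j > 0`, which is `P*`. Since `Tr(P·A) = Tr(P·ρ1) - τ·Tr(P·ρ0)`, the inequality
`Tr(P'·A) ≤ Tr(P*·A)` is the claim rearranged. -/

open Matrix ComplexOrder

/-- A density matrix on ℂ^n: Hermitian, positive semidefinite, trace 1. -/
def Matrix.IsDensityMatrix {n : ℕ} (ρ : Matrix (Fin n) (Fin n) ℂ) : Prop :=
  ρ.IsHermitian ∧ ρ.PosSemidef ∧ ρ.trace = 1

/-- A measurement operator: Hermitian `P` with `0 ≤ P ≤ I`, i.e. both `P` and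
`1 - P` are positive semidefinite. -/
def Matrix.IsMeasurement {n : ℕ} (P : Matrix (Fin n) (Fin n) ℂ) : Prop :=
  P.IsHermitian ∧ P.PosSemidef ∧ (1 - P).PosSemidef

/-- The orthogonal projection onto the span of the eigenvectors of a Hermitian
matrix `A` with strictly positive eigenvalues,
`P* = Σ_{η_j > 0} |η_j⟩⟨η_j|` in terms of a spectral decomposition of `A`. -/
noncomputable def Matrix.IsHermitian.posEigenProj {n : ℕ}
    {A : Matrix (Fin n) (Fin n) ℂ} (hA : A.IsHermitian) : Matrix (Fin n) (Fin n) ℂ :=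
  (hA.eigenvectorUnitary : Matrix (Fin n) (Fin n) ℂ) *
    Matrix.diagonal (fun j => if 0 < hA.eigenvalues j then (1 : ℂ) else 0) *
    star (hA.eigenvectorUnitary : Matrix (Fin n) (Fin n) ℂ)

namespace Matrix

variable {𝕜 m : Type*} [RCLike 𝕜] [Fintype m] [DecidableEq m]

omit [Fintype m] in
lemma diag_mem_Icc_of_posSemidef {Q : Matrix m m 𝕜} (h0 : Q.PosSemidef)
    (h1 : (1 - Q).PosSemidef) (j : m) : Q j j ∈ Set.Icc 0 1 := by
  refine ⟨h0.diag_nonneg, sub_nonneg.mp ?_⟩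
  simpa using h1.diag_nonneg (i := j)

lemma PosSemidef.star_mul_mul_unitary {P : Matrix m m 𝕜} (hP : P.PosSemidef)
    (U : unitaryGroup m 𝕜) : (star (U : Matrix m m 𝕜) * P * U).PosSemidef := by
  simpa only [star_eq_conjTranspose] using hP.conjTranspose_mul_mul_same (U : Matrix m m 𝕜)

lemma one_sub_star_mul_mul_unitary (P : Matrix m m 𝕜) (U : unitaryGroup m 𝕜) :
    1 - star (U : Matrix m m 𝕜) * P * U = star (U : Matrix m m 𝕜) * (1 - P) * U := by
  rw [mul_sub, sub_mul, mul_one, Unitary.coe_star_mul_self]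

theorem IsHermitian.trace_mul_eq_sum_eigenvalues {A : Matrix m m 𝕜} (hA : A.IsHermitian)
    (P : Matrix m m 𝕜) :
    (P * A).trace = ∑ j, (star (hA.eigenvectorUnitary : Matrix m m 𝕜) * P *
        hA.eigenvectorUnitary) j j * hA.eigenvalues j := by
  conv_lhs => rw [hA.spectral_theorem, Unitary.conjStarAlgAut_apply, ← mul_assoc, ← mul_assoc,
    trace_mul_cycle, ← mul_assoc]
  simp only [trace, diag_apply, mul_diagonal, Function.comp_apply]

end Matrix

namespace Matrix.IsHermitian

variable {n : ℕ} {A : Matrix (Fin n) (Fin n) ℂ}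

lemma star_eigenvectorUnitary_mul_posEigenProj_mul (hA : A.IsHermitian) :
    star (hA.eigenvectorUnitary : Matrix (Fin n) (Fin n) ℂ) * hA.posEigenProj *
        hA.eigenvectorUnitary =
      diagonal (fun j => if 0 < hA.eigenvalues j then (1 : ℂ) else 0) := by
  simp only [posEigenProj, mul_assoc, Unitary.coe_star_mul_self, mul_one]
  rw [← mul_assoc, Unitary.coe_star_mul_self, one_mul]

theorem trace_mul_le_trace_posEigenProj_mul (hA : A.IsHermitian)
    {P : Matrix (Fin n) (Fin n) ℂ} (hP0 : P.PosSemidef) (hP1 : (1 - P).PosSemidef) :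
    (P * A).trace ≤ (hA.posEigenProj * A).trace := by
  rw [hA.trace_mul_eq_sum_eigenvalues, hA.trace_mul_eq_sum_eigenvalues,
    star_eigenvectorUnitary_mul_posEigenProj_mul]
  refine Finset.sum_le_sum fun j _ => ?_
  set U := hA.eigenvectorUnitary
  obtain ⟨hq0, hq1⟩ := diag_mem_Icc_of_posSemidef (hP0.star_mul_mul_unitary U)
    (by simpa only [one_sub_star_mul_mul_unitary] using hP1.star_mul_mul_unitary U) j
  rw [diagonal_apply_eq]
  split_ifs with hj
  · exact mul_le_mul_of_nonneg_right hq1 (Complex.zero_le_real.mpr hj.le)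
  · rw [zero_mul]
    exact mul_nonpos_of_nonneg_of_nonpos hq0 (Complex.real_le_real.mpr (not_lt.mp hj))

end Matrix.IsHermitian

theorem neyman_pearson_type_inequality_general {n : ℕ} (ρ0 ρ1 : Matrix (Fin n) (Fin n) ℂ) (τ : ℝ)
    {A : Matrix (Fin n) (Fin n) ℂ} (hAdef : A = ρ1 - (τ : ℂ) • ρ0) (hA : A.IsHermitian)
    (P' : Matrix (Fin n) (Fin n) ℂ) (hP' : P'.IsMeasurement) :
    (τ : ℂ) * ((hA.posEigenProj * ρ0).trace - (P' * ρ0).trace) ≤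
      (hA.posEigenProj * ρ1).trace - (P' * ρ1).trace := by
  have key := hA.trace_mul_le_trace_posEigenProj_mul hP'.2.1 hP'.2.2
  have trace_mul_A (P : Matrix (Fin n) (Fin n) ℂ) :
      (P * A).trace = (P * ρ1).trace - τ * (P * ρ0).trace := by
    rw [hAdef, mul_sub, trace_sub, Matrix.mul_smul, trace_smul, smul_eq_mul]
  rw [← sub_nonneg]
  convert sub_nonneg.mpr key using 1
  rw [trace_mul_A, trace_mul_A]
  ring

/-- Neyman–Pearson-type inequality: with `x* = Tr(P*·ρ0)`,
`y* = Tr(P*·ρ1)` the false alarm/detection rates of the positive-eigenspace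
projection `P*` of `A = ρ1 - τ • ρ0`, every measurement `P'` with rates
`x' = Tr(P'·ρ0)`, `y' = Tr(P'·ρ1)` satisfies `τ·(x* - x') ≤ y* - y'`. -/
theorem neyman_pearson_type_inequality {n : ℕ} (ρ0 ρ1 : Matrix (Fin n) (Fin n) ℂ)
    (hρ0 : ρ0.IsDensityMatrix) (hρ1 : ρ1.IsDensityMatrix) (τ : ℝ) (hτ : 0 ≤ τ)
    {A : Matrix (Fin n) (Fin n) ℂ} (hAdef : A = ρ1 - (τ : ℂ) • ρ0) (hA : A.IsHermitian)
    (P' : Matrix (Fin n) (Fin n) ℂ) (hP' : P'.IsMeasurement) :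
    (τ : ℂ) * ((hA.posEigenProj * ρ0).trace - (P' * ρ0).trace) ≤
      (hA.posEigenProj * ρ1).trace - (P' * ρ1).trace :=
  neyman_pearson_type_inequality_general ρ0 ρ1 τ hAdef hA P' hP'
end

section
/- Let ρ0 and ρ1 be density matrices on ℂ^n, let τ ≥ 0, and let A = ρ1 − τ·ρ0 with eigenvalues η_1, …, η_n. Then the minimum of the Bayes risk τ·Tr(P·ρ0) + Tr((I − P)·ρ1) over all measurement operators P with 0 ≤ P ≤ I equals 1 − Σ_{η_j > 0} η_j, i.e., one minus the sum of the strictly positive eigenvalues of A, and this minimum is attained by the orthogonal projection onto the span of the eigenvectors of A with strictly positive eigenvalues. -/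
open Matrix ComplexOrder

/-!
Since `Tr ρ₁ = 1`, the risk of `P` is `1 - Tr(P A)`. Conjugating by the eigenvector unitary `U`
of `A` gives `Tr(P A) = Σⱼ qⱼ ηⱼ` with `qⱼ` the diagonal entries of `U⋆ P U`; these lie in `[0, 1]`
because `0 ≤ U⋆ P U ≤ 1`. Hence `Tr(P A) ≤ Σ_{ηⱼ > 0} ηⱼ`, with equality for `qⱼ = [ηⱼ > 0]`,
which is the choice `P = P*`.
-/

lemma Complex.mul_ofReal_le_ite_pos {q : ℂ} (hq₀ : 0 ≤ q) (hq₁ : q ≤ 1) (η : ℝ) :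
    q * η ≤ if 0 < η then (η : ℂ) else 0 := by
  split_ifs with hη
  · exact mul_le_of_le_one_left (by exact_mod_cast hη.le) hq₁
  · exact mul_nonpos_of_nonneg_of_nonpos hq₀ (by exact_mod_cast not_lt.mp hη)

namespace Matrix

section General

variable {n : Type*} [Fintype n] [DecidableEq n]

def bayesRisk {R : Type*} [CommRing R] (t : R) (ρ₀ ρ₁ P : Matrix n n R) : R :=
  t * (P * ρ₀).trace + ((1 - P) * ρ₁).trace

lemma bayesRisk_eq_trace_sub {R : Type*} [CommRing R] (t : R) (ρ₀ ρ₁ P : Matrix n n R) :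
    bayesRisk t ρ₀ ρ₁ P = ρ₁.trace - (P * (ρ₁ - t • ρ₀)).trace := by
  simp only [bayesRisk, Matrix.sub_mul, Matrix.mul_sub, Matrix.one_mul, Matrix.mul_smul,
    trace_sub, trace_smul, smul_eq_mul]
  ring

lemma IsHermitian.trace_mul_eq_sum {𝕜 : Type*} [RCLike 𝕜] {A : Matrix n n 𝕜}
    (hA : A.IsHermitian) (P : Matrix n n 𝕜) :
    (P * A).trace = ∑ j, (star (hA.eigenvectorUnitary : Matrix n n 𝕜) * P *
      hA.eigenvectorUnitary) j j * hA.eigenvalues j := by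
  conv_lhs => rw [hA.spectral_theorem, Unitary.conjStarAlgAut_apply]
  rw [← Matrix.mul_assoc, ← Matrix.mul_assoc, trace_mul_cycle, ← Matrix.mul_assoc]
  simp [trace, mul_diagonal]

end General

variable {n : ℕ}

lemma IsHermitian.star_eigenvectorUnitary_mul_posEigenProj_mul_s4
    {A : Matrix (Fin n) (Fin n) ℂ} (hA : A.IsHermitian) :
    star (hA.eigenvectorUnitary : Matrix (Fin n) (Fin n) ℂ) * hA.posEigenProj *
        hA.eigenvectorUnitary =
      diagonal fun j => if 0 < hA.eigenvalues j then (1 : ℂ) else 0 := by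
  simp only [posEigenProj, Matrix.mul_assoc, Unitary.coe_star_mul_self, Matrix.mul_one]
  rw [← Matrix.mul_assoc, Unitary.coe_star_mul_self, Matrix.one_mul]

lemma IsHermitian.trace_posEigenProj_mul {A : Matrix (Fin n) (Fin n) ℂ} (hA : A.IsHermitian) :
    (hA.posEigenProj * A).trace =
      ∑ j, if 0 < hA.eigenvalues j then (hA.eigenvalues j : ℂ) else 0 := by
  simp [hA.trace_mul_eq_sum, hA.star_eigenvectorUnitary_mul_posEigenProj_mul_s4, diagonal_apply_eq,
    ite_mul]

lemma IsMeasurement.star_mul_mul {P : Matrix (Fin n) (Fin n) ℂ} (hP : P.IsMeasurement)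
    (U : unitaryGroup (Fin n) ℂ) : (star (U : Matrix (Fin n) (Fin n) ℂ) * P * U).IsMeasurement := by
  have h₀ := hP.2.1.conjTranspose_mul_mul_same (U : Matrix (Fin n) (Fin n) ℂ)
  have h₁ := hP.2.2.conjTranspose_mul_mul_same (U : Matrix (Fin n) (Fin n) ℂ)
  rw [← star_eq_conjTranspose] at h₀
  rw [Matrix.mul_sub, Matrix.sub_mul, Matrix.mul_one, ← star_eq_conjTranspose,
    Unitary.coe_star_mul_self] at h₁
  exact ⟨h₀.isHermitian, h₀, h₁⟩

lemma IsMeasurement.diag_le_one {P : Matrix (Fin n) (Fin n) ℂ} (hP : P.IsMeasurement)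
    (j : Fin n) : P j j ≤ 1 := by
  simpa using hP.2.2.diag_nonneg (i := j)

lemma IsMeasurement.trace_mul_le {P A : Matrix (Fin n) (Fin n) ℂ} (hP : P.IsMeasurement)
    (hA : A.IsHermitian) : (P * A).trace ≤ (hA.posEigenProj * A).trace := by
  have hQ := hP.star_mul_mul hA.eigenvectorUnitary
  rw [hA.trace_posEigenProj_mul, hA.trace_mul_eq_sum]
  exact Finset.sum_le_sum fun j _ ↦
    Complex.mul_ofReal_le_ite_pos hQ.2.1.diag_nonneg (hQ.diag_le_one j) _

end Matrix

theorem min_bayes_risk_value_general {n : ℕ} (ρ0 ρ1 : Matrix (Fin n) (Fin n) ℂ)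
    (hρ1 : ρ1.IsDensityMatrix) (τ : ℝ)
    {A : Matrix (Fin n) (Fin n) ℂ} (hAdef : A = ρ1 - (τ : ℂ) • ρ0) (hA : A.IsHermitian) :
    (τ : ℂ) * (hA.posEigenProj * ρ0).trace + ((1 - hA.posEigenProj) * ρ1).trace =
        1 - ∑ j : Fin n, (if 0 < hA.eigenvalues j then (hA.eigenvalues j : ℂ) else 0) ∧
      ∀ P : Matrix (Fin n) (Fin n) ℂ, P.IsMeasurement →
        (τ : ℂ) * (hA.posEigenProj * ρ0).trace + ((1 - hA.posEigenProj) * ρ1).trace ≤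
          (τ : ℂ) * (P * ρ0).trace + ((1 - P) * ρ1).trace := by
  have risk (P : Matrix (Fin n) (Fin n) ℂ) : bayesRisk (τ : ℂ) ρ0 ρ1 P = 1 - (P * A).trace := by
    rw [bayesRisk_eq_trace_sub, hρ1.2.2, hAdef]
  refine ⟨(risk _).trans (by rw [hA.trace_posEigenProj_mul]), fun P hP ↦ ?_⟩
  exact (risk _).trans_le <| (sub_le_sub_left (hP.trace_mul_le hA) 1).trans_eq (risk P).symm

/-- The minimum Bayes risk `τ·Tr(P·ρ0) + Tr((I - P)·ρ1)` over all
measurement operators `0 ≤ P ≤ I` equals `1 - Σ_{η_j > 0} η_j` (one minus the sum of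
the strictly positive eigenvalues of `A = ρ1 - τ • ρ0`), and it is attained by the
orthogonal projection `P*` onto the span of eigenvectors of `A` with strictly
positive eigenvalues. -/
theorem min_bayes_risk_value {n : ℕ} (ρ0 ρ1 : Matrix (Fin n) (Fin n) ℂ)
    (hρ0 : ρ0.IsDensityMatrix) (hρ1 : ρ1.IsDensityMatrix) (τ : ℝ) (hτ : 0 ≤ τ)
    {A : Matrix (Fin n) (Fin n) ℂ} (hAdef : A = ρ1 - (τ : ℂ) • ρ0) (hA : A.IsHermitian) :
    (τ : ℂ) * (hA.posEigenProj * ρ0).trace + ((1 - hA.posEigenProj) * ρ1).trace =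
        1 - ∑ j : Fin n, (if 0 < hA.eigenvalues j then (hA.eigenvalues j : ℂ) else 0) ∧
      ∀ P : Matrix (Fin n) (Fin n) ℂ, P.IsMeasurement →
        (τ : ℂ) * (hA.posEigenProj * ρ0).trace + ((1 - hA.posEigenProj) * ρ1).trace ≤
          (τ : ℂ) * (P * ρ0).trace + ((1 - P) * ρ1).trace :=
  min_bayes_risk_value_general ρ0 ρ1 hρ1 τ hAdef hA
end
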